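/- arXiv:2211.13679 — 4 statements merged into one kernel-verified Lean document; each statement's English description precedes it below -/
import Mathlib

section
/- An injective monotone map φ : [1]^n → [1]^m obtained as a composition of face maps is uniquely determined by the pair (φ(α), φ(ω)): if φ and ψ are two such compositions of coordinate-insertion face maps with φ(α) = ψ(α) and φ(ω) = ψ(ω), then φ = ψ. -/
/-!
A composition of face maps `φ : [1]^n → [1]^m` copies its input along a strictly monotone
embedding `e : Fin n → Fin m` and is constant in the remaining coordinates. The image of `e` is
the set of coordinates where `φ α` and `φ ω` differ, and a strictly monotone map out of `Fin n`
is determined by its image; the constants are read off `φ α`.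
-/

/-- Compositions of coordinate-insertion face maps between cubes. -/
inductive IsFaceComp : {n m : ℕ} → ((Fin n → Bool) → (Fin m → Bool)) → Prop
  | id {n : ℕ} : IsFaceComp (fun x : Fin n → Bool => x)
  | comp {n m : ℕ} (i : Fin (m + 1)) (ε : Bool) (φ : (Fin n → Bool) → (Fin m → Bool)) :
      IsFaceComp φ → IsFaceComp (fun x => i.insertNth ε (φ x))

structure InsertsAlong {α : Type*} {n m : ℕ} (φ : (Fin n → α) → (Fin m → α))
    (e : Fin n → Fin m) : Prop where
  strictMono : StrictMono e
  apply_apply : ∀ x t, φ x (e t) = x t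
  apply_eq_of_notMem_range : ∀ k ∉ Set.range e, ∀ x y, φ x k = φ y k

namespace InsertsAlong

variable {α : Type*} {n m : ℕ} {φ ψ : (Fin n → α) → (Fin m → α)} {e : Fin n → Fin m}

theorem id : InsertsAlong (fun x : Fin n → α => x) _root_.id where
  strictMono := strictMono_id
  apply_apply _ _ := rfl
  apply_eq_of_notMem_range k hk := absurd ⟨k, rfl⟩ hk

theorem insertNth (h : InsertsAlong φ e) (i : Fin (m + 1)) (ε : α) :
    InsertsAlong (fun x => i.insertNth ε (φ x)) (i.succAbove ∘ e) where
  strictMono := (Fin.strictMono_succAbove i).comp h.strictMono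
  apply_apply x t := by
    simp only [Function.comp_apply, Fin.insertNth_apply_succAbove, h.apply_apply]
  apply_eq_of_notMem_range k hk x y := by
    rcases Fin.eq_self_or_eq_succAbove i k with rfl | ⟨k, rfl⟩
    · simp only [Fin.insertNth_apply_same]
    · have hk' : k ∉ Set.range e := fun ⟨t, ht⟩ => hk ⟨t, by simp [ht]⟩
      simp only [Fin.insertNth_apply_succAbove, h.apply_eq_of_notMem_range k hk' x y]

theorem range_eq (h : InsertsAlong φ e) {a b : α} (hab : a ≠ b) :
    Set.range e = {k | φ (fun _ => a) k ≠ φ (fun _ => b) k} := by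
  ext k
  refine ⟨?_, fun hk => by_contra fun hk' => hk (h.apply_eq_of_notMem_range k hk' _ _)⟩
  rintro ⟨t, rfl⟩
  simpa only [Set.mem_ofPred_eq, h.apply_apply] using hab

theorem eq (hφ : InsertsAlong φ e) (hψ : InsertsAlong ψ e) (a : α)
    (hconst : φ (fun _ => a) = ψ (fun _ => a)) : φ = ψ := by
  funext x k
  by_cases hk : k ∈ Set.range e
  · obtain ⟨t, rfl⟩ := hk
    rw [hφ.apply_apply, hψ.apply_apply]
  · rw [hφ.apply_eq_of_notMem_range k hk x, hψ.apply_eq_of_notMem_range k hk x,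
      congrFun hconst k]

end InsertsAlong

theorem IsFaceComp.exists_insertsAlong {n m : ℕ} {φ : (Fin n → Bool) → (Fin m → Bool)}
    (h : IsFaceComp φ) : ∃ e, InsertsAlong φ e := by
  induction h with
  | id => exact ⟨_, InsertsAlong.id⟩
  | comp i ε _ _ ih =>
    obtain ⟨e, he⟩ := ih
    exact ⟨_, he.insertNth i ε⟩

/-- a composition of face maps `[1]^n → [1]^m` is uniquely
determined by the images of `α = (0,...,0)` and `ω = (1,...,1)`. -/
theorem faceComp_determined_by_endpoints {n m : ℕ}
    (φ ψ : (Fin n → Bool) → (Fin m → Bool))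
    (hφ : IsFaceComp φ) (hψ : IsFaceComp ψ)
    (hα : φ (fun _ => false) = ψ (fun _ => false))
    (hω : φ (fun _ => true) = ψ (fun _ => true)) :
    φ = ψ := by
  obtain ⟨e, he⟩ := hφ.exists_insertsAlong
  obtain ⟨f, hf⟩ := hψ.exists_insertsAlong
  have hrange : Set.range e = Set.range f := by
    rw [he.range_eq Bool.false_ne_true, hf.range_eq Bool.false_ne_true, hα, hω]
  obtain rfl : e = f := (he.strictMono.range_inj hf.strictMono).mp hrange
  exact he.eq hf false hα
end

section
/- Given disjoint finite subsets A and B of {1,...,n}, the concatenation map * : Σ_A × Σ_B → Σ_{A ⊔ B}, sending a pair of arrangements (x, y) to the arrangement x followed by y, is a strictly monotone embedding of posets for the weak Bruhat orders: x ⤳_B x' and y ⤳_B y' if and only if x*y ⤳_B x'*y'. -/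
/-!
Appending a fixed word on either side preserves Bruhat steps. Conversely, keeping only the
letters of a fixed set sends a Bruhat step to a Bruhat step or to an equality, so a chain from
`x ++ y` to `x' ++ y'` projects onto chains from `x` to `x'` (keep `A`) and from `y` to `y'`
(keep `B`).
-/

/-- One step of the (reverse right) weak Bruhat relation on lists: swap an
adjacent descent `(u, v)` with `u > v` into `(v, u)`. -/
def BruhatStep (x y : List ℕ) : Prop :=
  ∃ (l r : List ℕ) (u v : ℕ), v < u ∧ x = l ++ u :: v :: r ∧ y = l ++ v :: u :: r

open Relation

namespace List

variable {α : Type*} [DecidableEq α] {A B : Finset α} {l₁ l₂ : List α}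

theorem filter_mem_append_left (hAB : _root_.Disjoint A B) (h₁ : l₁.toFinset ⊆ A)
    (h₂ : l₂.toFinset ⊆ B) : (l₁ ++ l₂).filter (· ∈ A) = l₁ := by
  rw [filter_append, filter_eq_self.2, filter_eq_nil_iff.2, append_nil]
  · exact fun a ha => by simpa using Finset.disjoint_right.1 hAB (h₂ (mem_toFinset.2 ha))
  · exact fun a ha => by simpa using h₁ (mem_toFinset.2 ha)

theorem filter_mem_append_right (hAB : _root_.Disjoint A B) (h₁ : l₁.toFinset ⊆ A)
    (h₂ : l₂.toFinset ⊆ B) : (l₁ ++ l₂).filter (· ∈ B) = l₂ := by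
  rw [filter_append, filter_eq_nil_iff.2, filter_eq_self.2, nil_append]
  · exact fun a ha => by simpa using h₂ (mem_toFinset.2 ha)
  · exact fun a ha => by simpa using Finset.disjoint_left.1 hAB (h₁ (mem_toFinset.2 ha))

end List

namespace BruhatStep

variable {x x' : List ℕ}

theorem append_right (y : List ℕ) (h : BruhatStep x x') : BruhatStep (x ++ y) (x' ++ y) := by
  obtain ⟨l, r, u, v, huv, rfl, rfl⟩ := h
  exact ⟨l, r ++ y, u, v, huv, by simp, by simp⟩

theorem append_left (y : List ℕ) (h : BruhatStep x x') : BruhatStep (y ++ x) (y ++ x') := by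
  obtain ⟨l, r, u, v, huv, rfl, rfl⟩ := h
  exact ⟨y ++ l, r, u, v, huv, by simp, by simp⟩

theorem filter (p : ℕ → Bool) (h : BruhatStep x x') :
    ReflTransGen BruhatStep (x.filter p) (x'.filter p) := by
  obtain ⟨l, r, u, v, huv, rfl, rfl⟩ := h
  cases hu : p u <;> cases hv : p v <;>
    simp only [List.filter_append, List.filter_cons, hu, hv, if_true, Bool.false_eq_true, if_false]
  · exact .refl
  · exact .refl
  · exact .refl
  · exact .single ⟨l.filter p, r.filter p, u, v, huv, rfl, rfl⟩

end BruhatStep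

namespace Relation.ReflTransGen

variable {x x' y y' : List ℕ}

theorem bruhatStep_append (hx : ReflTransGen BruhatStep x x')
    (hy : ReflTransGen BruhatStep y y') : ReflTransGen BruhatStep (x ++ y) (x' ++ y') :=
  (hx.lift (· ++ y) fun _ _ h => h.append_right y).trans
    (hy.lift (x' ++ ·) fun _ _ h => h.append_left x')

theorem bruhatStep_filter (p : ℕ → Bool) (h : ReflTransGen BruhatStep x x') :
    ReflTransGen BruhatStep (x.filter p) (x'.filter p) :=
  h.lift' _ fun _ _ h => h.filter p

end Relation.ReflTransGen

theorem weakBruhat_concat_embedding_general (A B : Finset ℕ)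
    (hAB : Disjoint A B)
    (x x' y y' : List ℕ)
    (hxA : x.toFinset = A)
    (hx'A : x'.toFinset = A)
    (hyB : y.toFinset = B)
    (hy'B : y'.toFinset = B) :
    (Relation.ReflTransGen BruhatStep x x' ∧ Relation.ReflTransGen BruhatStep y y') ↔
      Relation.ReflTransGen BruhatStep (x ++ y) (x' ++ y') := by
  refine ⟨fun ⟨hx, hy⟩ => hx.bruhatStep_append hy, fun h => ⟨?_, ?_⟩⟩
  · simpa only [List.filter_mem_append_left hAB hxA.le hyB.le,
      List.filter_mem_append_left hAB hx'A.le hy'B.le] using h.bruhatStep_filter (· ∈ A)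
  · simpa only [List.filter_mem_append_right hAB hxA.le hyB.le,
      List.filter_mem_append_right hAB hx'A.le hy'B.le] using h.bruhatStep_filter (· ∈ B)

/-- for disjoint `A, B ⊆ {1,...,n}`, concatenation
`Σ_A × Σ_B → Σ_{A ⊔ B}` is an embedding of weak Bruhat orders:
`x ⤳ x'` and `y ⤳ y'` if and only if `x ++ y ⤳ x' ++ y'`. -/
theorem weakBruhat_concat_embedding (n : ℕ) (A B : Finset ℕ)
    (hA : A ⊆ Finset.Icc 1 n) (hB : B ⊆ Finset.Icc 1 n) (hAB : Disjoint A B)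
    (x x' y y' : List ℕ)
    (hx : x.Nodup) (hxA : x.toFinset = A)
    (hx' : x'.Nodup) (hx'A : x'.toFinset = A)
    (hy : y.Nodup) (hyB : y.toFinset = B)
    (hy' : y'.Nodup) (hy'B : y'.toFinset = B) :
    (Relation.ReflTransGen BruhatStep x x' ∧ Relation.ReflTransGen BruhatStep y y') ↔
      Relation.ReflTransGen BruhatStep (x ++ y) (x' ++ y') :=
  weakBruhat_concat_embedding_general A B hAB x x' y y' hxA hx'A hyB hy'B
end

section
/- For subsets a ⊆ b of {1,...,n} with sup a ≤ sup b (setting sup ∅ = 0), the map ψ sending an arrangement (x_1,...,x_k) of b \ a to the set {x_l | x_p < x_l for all p < l} ∩ (sup a, sup b) (open interval of integers) is monotone from the weak Bruhat order on Σ_{b\a} to the inclusion order on subsets of the interval (sup a, sup b): if x ⤳_B y then ψ(x) ⊆ ψ(y). -/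
/-- The set of left-to-right maxima of a list: entries strictly greater than
all earlier entries. -/
def ltrMaxima (w : List ℕ) : Set ℕ :=
  {z | ∃ l, l < w.length ∧ w.getD l 0 = z ∧ ∀ p < l, w.getD p 0 < z}

/-- The map `ψ`: left-to-right maxima lying strictly between `sup a` and `sup b`. -/
def psiMap (a b : Finset ℕ) (w : List ℕ) : Set ℕ :=
  ltrMaxima w ∩ Set.Ioo (a.sup id) (b.sup id)

lemma mem_ltrMaxima_iff {w : List ℕ} {z : ℕ} :
    z ∈ ltrMaxima w ↔ ∃ l r, w = l ++ z :: r ∧ ∀ p ∈ l, p < z := by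
  constructor
  · rintro ⟨i, hi, rfl, hlt⟩
    refine ⟨w.take i, w.drop (i + 1), ?_, fun p hp => ?_⟩
    · rw [List.getD_eq_getElem _ _ hi, List.getElem_cons_drop, List.take_append_drop]
    · obtain ⟨j, hj, rfl⟩ := List.mem_iff_getElem.1 hp
      rw [List.length_take] at hj
      have hji : j < i := by omega
      rw [List.getElem_take, ← List.getD_eq_getElem _ 0]
      exact hlt j hji
  · rintro ⟨l, r, rfl, hl⟩
    refine ⟨l.length, by simp, by simp, fun p hp => ?_⟩
    rw [List.getD_append _ _ _ _ hp, List.getD_eq_getElem _ _ hp]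
    exact hl _ (List.getElem_mem hp)

lemma ltrMaxima_subset_of_bruhatStep {x y : List ℕ} (h : BruhatStep x y) :
    ltrMaxima x ⊆ ltrMaxima y := by
  obtain ⟨L, R, u, v, hvu, rfl, rfl⟩ := h
  intro z hz
  obtain ⟨l, r, hw, hl⟩ := mem_ltrMaxima_iff.1 hz
  rw [mem_ltrMaxima_iff]
  -- Locate `z` relative to the swapped pair: before it, at `u` (reached from either side of the
  -- split), at `v` (impossible, as `u > v` precedes it), or after it.
  rcases List.append_eq_append_iff.1 hw.symm with ⟨m, rfl, hm⟩ | ⟨c, rfl, hc⟩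
  · rcases m with _ | ⟨w, m⟩
    · obtain ⟨rfl, rfl⟩ : z = u ∧ r = v :: R := by simpa [eq_comm] using hm
      exact ⟨l ++ [v], R, by simp, by simpa [or_imp, forall_and] using ⟨hl, hvu⟩⟩
    · obtain ⟨rfl, rfl⟩ := List.cons_eq_cons.1 hm
      exact ⟨l, m ++ v :: u :: R, by simp, hl⟩
  · rcases c with _ | ⟨w, _ | ⟨w', c⟩⟩
    · obtain ⟨rfl, rfl⟩ : u = z ∧ v :: R = r := by simpa using hc
      exact ⟨L ++ [v], R, by simp, by simpa [or_imp, forall_and] using ⟨by simpa using hl, hvu⟩⟩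
    · obtain ⟨rfl, rfl, -⟩ : u = w ∧ v = z ∧ R = r := by simpa using hc
      exact absurd (hl u (by simp)) hvu.not_gt
    · obtain ⟨rfl, rfl, rfl⟩ : u = w ∧ v = w' ∧ R = c ++ z :: r := by simpa using hc
      refine ⟨L ++ v :: u :: c, r, by simp, fun p hp => hl p ?_⟩
      simp only [List.mem_append, List.mem_cons] at hp ⊢
      tauto

lemma ltrMaxima_subset_of_reflTransGen {x y : List ℕ}
    (h : Relation.ReflTransGen BruhatStep x y) : ltrMaxima x ⊆ ltrMaxima y := by
  induction h with
  | refl => exact subset_rfl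
  | tail _ hstep ih => exact ih.trans (ltrMaxima_subset_of_bruhatStep hstep)

theorem psi_monotone_general (a b : Finset ℕ)
    (x y : List ℕ)
    (hxy : Relation.ReflTransGen BruhatStep x y) :
    psiMap a b x ⊆ psiMap a b y :=
  Set.inter_subset_inter_left _ (ltrMaxima_subset_of_reflTransGen hxy)

/-- `ψ` is monotone from the weak Bruhat order on arrangements
of `b \ a` to the inclusion order: if `x ⤳_B y` then `ψ(x) ⊆ ψ(y)`. -/
theorem psi_monotone (n : ℕ) (a b : Finset ℕ) (hab : a ⊆ b)
    (hb : b ⊆ Finset.Icc 1 n) (hsup : a.sup id ≤ b.sup id)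
    (x y : List ℕ)
    (hx : x.Nodup) (hxA : x.toFinset = b \ a)
    (hy : y.Nodup) (hyA : y.toFinset = b \ a)
    (hxy : Relation.ReflTransGen BruhatStep x y) :
    psiMap a b x ⊆ psiMap a b y :=
  psi_monotone_general a b x y hxy
end

section
/- The map ψ of left-to-right maxima is compatible with concatenation: for a ⊆ b ⊆ c subsets of {1,...,n} with sup a < sup b < sup c, arrangements x ∈ Σ_{b\a} and y ∈ Σ_{c\b}, and z the concatenation of x and y (an arrangement of c \ a), one has ψ_{a,c}(z) = ψ_{a,b}(x) ∪ {sup b} ∪ ψ_{b,c}(y), where ψ_{u,v}(w) = {w_l | ∀p<l, w_p < w_l} ∩ (sup u, sup v). -/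
@[simp]
lemma ltrMaxima_nil : ltrMaxima [] = ∅ := by
  simp [ltrMaxima]

lemma ltrMaxima_cons (h : ℕ) (t : List ℕ) :
    ltrMaxima (h :: t) = insert h {z ∈ ltrMaxima t | h < z} := by
  ext z
  constructor
  · rintro ⟨_ | l, hl, hz, hmax⟩
    · exact Or.inl hz.symm
    · refine Or.inr ⟨⟨l, by simpa using hl, hz, fun p hp => hmax (p + 1) (by omega)⟩, ?_⟩
      simpa using hmax 0 (by omega)
  · rintro (rfl | ⟨⟨l, hl, hz, hmax⟩, hhz⟩)
    · exact ⟨0, by simp, rfl, by simp⟩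
    · refine ⟨l + 1, by simpa using hl, hz, fun p hp => ?_⟩
      rcases p with _ | p
      · simpa using hhz
      · exact hmax p (by omega)

lemma ltrMaxima_append (x y : List ℕ) :
    ltrMaxima (x ++ y) = ltrMaxima x ∪ {z ∈ ltrMaxima y | ∀ t ∈ x, t < z} := by
  induction x with
  | nil => simp
  | cons h x ih =>
    ext z
    simp only [List.cons_append, ltrMaxima_cons, ih, Set.mem_insert_iff, Set.mem_union,
      Set.mem_ofPred_eq, List.mem_cons, forall_eq_or_imp]
    tauto

lemma mem_of_mem_ltrMaxima {w : List ℕ} {z : ℕ} (hz : z ∈ ltrMaxima w) : z ∈ w := by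
  induction w with
  | nil => simp at hz
  | cons h t ih =>
    rw [ltrMaxima_cons] at hz
    rcases hz with rfl | ⟨hz, -⟩
    · exact List.mem_cons_self
    · exact List.mem_cons_of_mem h (ih hz)

lemma mem_ltrMaxima_of_isGreatest {w : List ℕ} {m : ℕ} (hm : IsGreatest {t | t ∈ w} m) :
    m ∈ ltrMaxima w := by
  induction w with
  | nil => simpa using hm.1
  | cons h t ih =>
    rw [ltrMaxima_cons]
    rcases eq_or_ne m h with rfl | hne
    · exact Set.mem_insert _ _
    · have hmt : m ∈ t := (List.mem_cons.mp hm.1).resolve_left hne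
      exact Or.inr ⟨ih ⟨hmt, fun s hs => hm.2 (List.mem_cons_of_mem h hs)⟩,
        (hm.2 List.mem_cons_self).lt_of_ne hne.symm⟩

lemma ltrMaxima_append_of_isGreatest {x : List ℕ} {m : ℕ} (hm : IsGreatest {t | t ∈ x} m)
    (y : List ℕ) : ltrMaxima (x ++ y) = ltrMaxima x ∪ {z ∈ ltrMaxima y | m < z} := by
  rw [ltrMaxima_append]
  congr 1
  ext z
  exact and_congr_right fun _ => ⟨fun h => h m hm.1, fun h t ht => (hm.2 ht).trans_lt h⟩

lemma sup_id_mem_sdiff_of_sup_lt {α : Type*} [LinearOrder α] [OrderBot α] {s t : Finset α}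
    (h : s.sup id < t.sup id) : t.sup id ∈ t \ s := by
  have ht : t.Nonempty := Finset.nonempty_iff_ne_empty.mpr (by rintro rfl; simp at h)
  obtain ⟨i, hi, hsup⟩ := Finset.exists_mem_eq_sup t ht id
  refine Finset.mem_sdiff.mpr ⟨hsup ▸ hi, fun his => ?_⟩
  exact (Finset.le_sup (f := id) his).not_gt (hsup ▸ h)

theorem psi_concat_general (a b c : Finset ℕ)
    (hsup1 : a.sup id < b.sup id) (hsup2 : b.sup id < c.sup id)
    (x y : List ℕ)
    (hxA : x.toFinset = b \ a) :
    psiMap a c (x ++ y) = psiMap a b x ∪ {b.sup id} ∪ psiMap b c y := by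
  have hm : IsGreatest {t | t ∈ x} (b.sup id) := by
    simp only [IsGreatest, upperBounds, Set.mem_ofPred_eq, ← List.mem_toFinset, hxA]
    exact ⟨sup_id_mem_sdiff_of_sup_lt hsup1,
      fun t ht => Finset.le_sup (f := id) (Finset.mem_sdiff.mp ht).1⟩
  have hle : ∀ z ∈ ltrMaxima x, z ≤ b.sup id := fun z hz => hm.2 (mem_of_mem_ltrMaxima hz)
  have hmax : b.sup id ∈ ltrMaxima x := mem_ltrMaxima_of_isGreatest hm
  ext z
  simp only [psiMap, ltrMaxima_append_of_isGreatest hm, Set.mem_inter_iff, Set.mem_union,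
    Set.mem_ofPred_eq, Set.mem_Ioo, Set.mem_singleton_iff]
  grind [hle z]

/-- `ψ` is compatible with concatenation: for `a ⊆ b ⊆ c` with
`sup a < sup b < sup c`, an arrangement `x` of `b \ a` and an arrangement `y`
of `c \ b`, one has `ψ_{a,c}(x ++ y) = ψ_{a,b}(x) ∪ {sup b} ∪ ψ_{b,c}(y)`. -/
theorem psi_concat (n : ℕ) (a b c : Finset ℕ)
    (hab : a ⊆ b) (hbc : b ⊆ c) (hc : c ⊆ Finset.Icc 1 n)
    (hsup1 : a.sup id < b.sup id) (hsup2 : b.sup id < c.sup id)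
    (x y : List ℕ)
    (hx : x.Nodup) (hxA : x.toFinset = b \ a)
    (hy : y.Nodup) (hyB : y.toFinset = c \ b) :
    psiMap a c (x ++ y) = psiMap a b x ∪ {b.sup id} ∪ psiMap b c y :=
  psi_concat_general a b c hsup1 hsup2 x y hxA
end
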